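/- arXiv:1402.1954 — 2 statements merged into one kernel-verified Lean document; each statement's English description precedes it below -/
import Mathlib

section
/- If V is finite-dimensional, then dim_ℂ H_BC + dim_ℂ H_A = dim_ℂ H_∂ + dim_ℂ H_∂̄ + dim_ℂ A + dim_ℂ F. -/
open Submodule LinearMap

noncomputable section

/-- The quotient of the subspace `q` of `V` by (its intersection with) the subspace `p`. -/
abbrev SubQuot {V : Type*} [AddCommGroup V] [Module ℂ V] (p q : Submodule ℂ V) : Type _ :=
  q ⧸ (p.comap q.subtype)

lemma subquot_finrank {V : Type*} [AddCommGroup V] [Module ℂ V] [FiniteDimensional ℂ V]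
    {p q : Submodule ℂ V} (h : p ≤ q) :
    Module.finrank ℂ (SubQuot p q) + Module.finrank ℂ p = Module.finrank ℂ q := by
  have := Submodule.finrank_quotient_add_finrank (p.comap q.subtype)
  rwa [LinearEquiv.finrank_eq (Submodule.comapSubtypeEquivOfLe h)] at this

/-- if `V` is finite-dimensional then
`dim H_BC + dim H_A = dim H_∂ + dim H_∂̄ + dim A + dim F`.
Here `d1 = ∂`, `d2 = ∂̄`. -/
theorem statement4 {V : Type*} [AddCommGroup V] [Module ℂ V] [FiniteDimensional ℂ V]
    (d1 d2 : V →ₗ[ℂ] V)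
    (h11 : d1 ∘ₗ d1 = 0) (h22 : d2 ∘ₗ d2 = 0) (h12 : d1 ∘ₗ d2 + d2 ∘ₗ d1 = 0) :
    Module.finrank ℂ (SubQuot (range (d1 ∘ₗ d2)) (ker d1 ⊓ ker d2)) +
      Module.finrank ℂ (SubQuot (range d1 ⊔ range d2) (ker (d1 ∘ₗ d2))) =
    Module.finrank ℂ (SubQuot (range d1) (ker d1)) +
      Module.finrank ℂ (SubQuot (range d2) (ker d2)) +
      Module.finrank ℂ (SubQuot (range (d1 ∘ₗ d2)) (range d1 ⊓ range d2)) +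
      Module.finrank ℂ (SubQuot (ker d1 ⊔ ker d2) (ker (d1 ∘ₗ d2))) := by
  rw [LinearMap.ext_iff] at h11 h22 h12
  simp only [LinearMap.comp_apply, LinearMap.add_apply, LinearMap.zero_apply] at h11 h22 h12
  have ha : ∀ x, d2 (d1 x) = -d1 (d2 x) := fun x => by
    exact eq_neg_of_add_eq_zero_right (h12 x)
  have hR1K1 : range d1 ≤ ker d1 := by
    rintro _ ⟨x, rfl⟩; exact h11 x
  have hR2K2 : range d2 ≤ ker d2 := by
    rintro _ ⟨x, rfl⟩; exact h22 x
  have hBC : range (d1 ∘ₗ d2) ≤ ker d1 ⊓ ker d2 := by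
    rintro _ ⟨x, rfl⟩
    refine ⟨?_, ?_⟩
    · show d1 ((d1 ∘ₗ d2) x) = 0
      simp [LinearMap.comp_apply, h11]
    · show d2 ((d1 ∘ₗ d2) x) = 0
      simp [LinearMap.comp_apply, ha, h22]
  have hA : range d1 ⊔ range d2 ≤ ker (d1 ∘ₗ d2) := by
    refine sup_le ?_ ?_
    · rintro _ ⟨x, rfl⟩
      show d1 (d2 (d1 x)) = 0
      rw [ha]; simp [h11]
    · rintro _ ⟨x, rfl⟩
      show d1 (d2 (d2 x)) = 0
      rw [h22]; simp
  have hAa : range (d1 ∘ₗ d2) ≤ range d1 ⊓ range d2 := by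
    rintro _ ⟨x, rfl⟩
    refine ⟨⟨d2 x, rfl⟩, ⟨-(d1 x), ?_⟩⟩
    show d2 (-(d1 x)) = d1 (d2 x)
    rw [map_neg, ha, neg_neg]
  have hF : ker d1 ⊔ ker d2 ≤ ker (d1 ∘ₗ d2) := by
    refine sup_le ?_ ?_
    · intro x hx
      show d1 (d2 x) = 0
      have : d1 x = 0 := hx
      rw [← neg_eq_zero, ← ha, this, map_zero]
    · intro x hx
      show d1 (d2 x) = 0
      have : d2 x = 0 := hx
      rw [this, map_zero]
  have e1 := subquot_finrank hBC
  have e2 := subquot_finrank hA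
  have e3 := subquot_finrank hR1K1
  have e4 := subquot_finrank hR2K2
  have e5 := subquot_finrank hAa
  have e6 := subquot_finrank hF
  have s1 := Submodule.finrank_sup_add_finrank_inf_eq (range d1) (range d2)
  have s2 := Submodule.finrank_sup_add_finrank_inf_eq (ker d1) (ker d2)
  omega
end
end

section
/- If V is finite-dimensional, then dim_ℂ H_BC + dim_ℂ H_A ≥ dim_ℂ H_∂ + dim_ℂ H_∂̄ (the Frölicher-type inequality for Bott-Chern and Aeppli cohomology in each bidegree). -/
open Submodule LinearMap

noncomputable section

/-- if `V` is finite-dimensional then the Frölicher-type inequality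
`dim H_BC + dim H_A ≥ dim H_∂ + dim H_∂̄` holds.  Here `d1 = ∂`, `d2 = ∂̄`. -/
theorem statement5 {V : Type*} [AddCommGroup V] [Module ℂ V] [FiniteDimensional ℂ V]
    (d1 d2 : V →ₗ[ℂ] V)
    (h11 : d1 ∘ₗ d1 = 0) (h22 : d2 ∘ₗ d2 = 0) (h12 : d1 ∘ₗ d2 + d2 ∘ₗ d1 = 0) :
    Module.finrank ℂ (SubQuot (range (d1 ∘ₗ d2)) (ker d1 ⊓ ker d2)) +
      Module.finrank ℂ (SubQuot (range d1 ⊔ range d2) (ker (d1 ∘ₗ d2))) ≥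
    Module.finrank ℂ (SubQuot (range d1) (ker d1)) +
      Module.finrank ℂ (SubQuot (range d2) (ker d2)) := by
  have h21 : d2 ∘ₗ d1 = -(d1 ∘ₗ d2) := by
    rw [eq_neg_iff_add_eq_zero, add_comm]; exact h12
  -- inclusions
  have hr1 : range d1 ≤ ker d1 := (range_le_ker_iff).2 h11
  have hr2 : range d2 ≤ ker d2 := (range_le_ker_iff).2 h22
  have hrBC : range (d1 ∘ₗ d2) ≤ ker d1 ⊓ ker d2 := by
    refine le_inf ?_ ?_
    · exact (range_le_ker_iff).2 (by rw [← LinearMap.comp_assoc, h11, LinearMap.zero_comp])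
    · refine (range_le_ker_iff).2 ?_
      rw [← LinearMap.comp_assoc, h21, LinearMap.neg_comp, LinearMap.comp_assoc, h22,
        LinearMap.comp_zero, neg_zero]
  have hrA : range d1 ⊔ range d2 ≤ ker (d1 ∘ₗ d2) := by
    refine sup_le ?_ ?_
    · refine (range_le_ker_iff).2 ?_
      rw [LinearMap.comp_assoc, h21, LinearMap.comp_neg, ← LinearMap.comp_assoc, h11,
        LinearMap.zero_comp, neg_zero]
    · exact (range_le_ker_iff).2 (by rw [LinearMap.comp_assoc, h22, LinearMap.comp_zero])
  have hksup : ker d1 ⊔ ker d2 ≤ ker (d1 ∘ₗ d2) := by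
    refine sup_le ?_ ?_
    · intro x hx
      simp only [LinearMap.mem_ker] at hx ⊢
      have : d1 (d2 x) + d2 (d1 x) = 0 := by
        have := congrArg (fun f => f x) h12; simpa using this
      simp only [LinearMap.comp_apply]
      rw [hx] at this; simpa using this
    · intro x hx
      simp only [LinearMap.mem_ker] at hx ⊢
      simp [LinearMap.comp_apply, hx]
  have hrinf : range (d1 ∘ₗ d2) ≤ range d1 ⊓ range d2 := by
    refine le_inf (range_comp_le_range d2 d1) ?_
    have : range (d1 ∘ₗ d2) = range (d2 ∘ₗ d1) := by
      rw [h21]; simp [LinearMap.range_neg]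
    rw [this]
    exact range_comp_le_range d1 d2
  -- dimension identities
  have e1 := subquot_finrank hr1
  have e2 := subquot_finrank hr2
  have eBC := subquot_finrank hrBC
  have eA := subquot_finrank hrA
  have rn1 := LinearMap.finrank_range_add_finrank_ker d1
  have rn2 := LinearMap.finrank_range_add_finrank_ker d2
  have rn12 := LinearMap.finrank_range_add_finrank_ker (d1 ∘ₗ d2)
  have hsk := Submodule.finrank_sup_add_finrank_inf_eq (ker d1) (ker d2)
  have hsr := Submodule.finrank_sup_add_finrank_inf_eq (range d1) (range d2)
  have m1 : Module.finrank ℂ ↥(ker d1 ⊔ ker d2) ≤ Module.finrank ℂ ↥(ker (d1 ∘ₗ d2)) :=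
    Submodule.finrank_mono hksup
  have m2 : Module.finrank ℂ ↥(range (d1 ∘ₗ d2)) ≤
      Module.finrank ℂ ↥(range d1 ⊓ range d2) := Submodule.finrank_mono hrinf
  omega
end
end
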